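/- Let I ⊂ ℂ[S,T] be the ideal generated by (T−1)(T²−1), (S−1)(S²−1), and (S−T)(T−1), and let A = ℂ[S,T]/I. Then the ideal m of A generated by S−1 and T−1 is maximal, and the localization A_m is isomorphic as a ℂ-algebra to ℂ[u,v]/⟨u,v⟩². In particular A_m is a 3-dimensional local ℂ-algebra whose maximal ideal squares to zero. -/

import Mathlib

open MvPolynomial

/-- The defining ideal of the virtual K-theory of `ℙ(1,2)` over `ℂ`:
`⟨(T-1)(T²-1), (S-1)(S²-1), (S-T)(T-1)⟩ ⊆ ℂ[S,T]`, with `S = X 0`, `T = X 1`. -/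
noncomputable def virtIdeal2C : Ideal (MvPolynomial (Fin 2) ℂ) :=
  Ideal.span
    {(X 1 - 1) * ((X 1) ^ 2 - 1),
     (X 0 - 1) * ((X 0) ^ 2 - 1),
     (X 0 - X 1) * (X 1 - 1)}

/-- `A = ℂ[S,T]/⟨(T-1)(T²-1), (S-1)(S²-1), (S-T)(T-1)⟩`. -/
abbrev VirtK2C : Type := MvPolynomial (Fin 2) ℂ ⧸ virtIdeal2C

/-- The augmentation ideal `m = ⟨S - 1, T - 1⟩` of `A`. -/
noncomputable def augIdeal2 : Ideal VirtK2C :=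
  Ideal.span
    {Ideal.Quotient.mk virtIdeal2C (X 0) - 1,
     Ideal.Quotient.mk virtIdeal2C (X 1) - 1}

/-- `ℂ[u,v]/⟨u,v⟩²`, the K-theory of the crepant resolution `Z₂`. -/
abbrev SquareZeroTwoVars : Type :=
  MvPolynomial (Fin 2) ℂ ⧸ ((Ideal.span {(X 0 : MvPolynomial (Fin 2) ℂ), X 1}) ^ 2)

/-!
Write `S = 1 + u` and `T = 1 + v`. The relations become `v²(v + 2)`, `u²(u + 2)` and
`(u - v)v`, all of which lie in `⟨u, v⟩²`; hence `A ⧸ 𝔪² ≅ ℂ[u,v]/⟨u,v⟩²`, which has basis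
`1, u, v`. The element `(S + 1)(T + 1) = (u + 2)(v + 2)` lies outside `𝔪` and kills `u²`, `uv`
and `v²` in `A`, so `𝔪²` dies in `A_𝔪`. Thus the maximal ideal of `A_𝔪` squares to zero and
`A_𝔪 ≅ A_𝔪 ⧸ 𝔪²A_𝔪 ≅ A ⧸ 𝔪²`.
-/

namespace Finsupp

theorem degree_eq_one_iff {σ : Type*} (x : σ →₀ ℕ) :
    degree x = 1 ↔ ∃ i, x = single i 1 := by
  classical
  refine ⟨fun h => ?_, fun ⟨i, hi⟩ => hi ▸ degree_single i 1⟩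
  obtain ⟨i, hi⟩ := Multiset.card_eq_one.mp ((card_toMultiset x).trans h)
  exact ⟨i, by rw [← toMultiset_toFinsupp x, hi, Multiset.toFinsupp_singleton]⟩

theorem degree_le_one_iff {σ : Type*} (x : σ →₀ ℕ) :
    degree x ≤ 1 ↔ x = 0 ∨ ∃ i, x = single i 1 := by
  rw [← degree_eq_zero_iff, ← degree_eq_one_iff]
  omega

end Finsupp

namespace MvPolynomial

variable {σ R : Type*} [CommRing R]

section FirstOrder

variable (σ R)

noncomputable def firstOrderCoeffs : MvPolynomial σ R →ₗ[R] R × (σ → R) :=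
  (lcoeff R 0).prod (LinearMap.pi fun i => lcoeff R (Finsupp.single i 1))

@[simp]
theorem firstOrderCoeffs_apply (p : MvPolynomial σ R) :
    firstOrderCoeffs σ R p = (coeff 0 p, fun i => coeff (Finsupp.single i 1) p) := rfl

theorem ker_firstOrderCoeffs :
    LinearMap.ker (firstOrderCoeffs σ R) = (idealOfVars σ R ^ 2).restrictScalars R := by
  ext p
  simp [_root_.funext_iff, mem_pow_idealOfVars_iff', Finsupp.degree_le_one_iff, or_imp,
    forall_and]

theorem firstOrderCoeffs_surjective [Fintype σ] : Function.Surjective (firstOrderCoeffs σ R) := by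
  classical
  rintro ⟨a, f⟩
  refine ⟨C a + ∑ i, C (f i) * X i, ?_⟩
  simp only [firstOrderCoeffs_apply, Prod.mk.injEq, coeff_add, coeff_sum, coeff_C_mul, coeff_X]
  constructor
  · simp
  · ext i
    simp [Finsupp.single_eq_single_iff, eq_comm (a := (0 : σ →₀ ℕ))]

noncomputable def quotientIdealOfVarsSqEquiv [Fintype σ] :
    (MvPolynomial σ R ⧸ idealOfVars σ R ^ 2) ≃ₗ[R] R × (σ → R) :=
  (Submodule.Quotient.restrictScalarsEquiv R (idealOfVars σ R ^ 2)).symm ≪≫ₗ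
    Submodule.quotEquivOfEq _ _ (ker_firstOrderCoeffs σ R).symm ≪≫ₗ
    (firstOrderCoeffs σ R).quotKerEquivOfSurjective (firstOrderCoeffs_surjective σ R)

theorem finrank_quotient_idealOfVars_sq [Fintype σ] [Nontrivial R] :
    Module.finrank R (MvPolynomial σ R ⧸ idealOfVars σ R ^ 2) = 1 + Fintype.card σ := by
  rw [(quotientIdealOfVarsSqEquiv σ R).finrank_eq, Module.finrank_prod, Module.finrank_self,
    Module.finrank_fintype_fun_eq_card]

end FirstOrder

variable (σ R) in
theorem idealOfVars_eq_ker_constantCoeff :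
    idealOfVars σ R = RingHom.ker (constantCoeff : MvPolynomial σ R →+* R) := by
  ext p
  rw [← pow_one (idealOfVars σ R), mem_pow_idealOfVars_iff', RingHom.mem_ker]
  simp [Finsupp.degree_eq_zero_iff, constantCoeff_eq]

noncomputable def translation (c : σ → R) : MvPolynomial σ R ≃ₐ[R] MvPolynomial σ R :=
  AlgEquiv.ofAlgHom (aeval fun i => X i + C (c i)) (aeval fun i => X i - C (c i))
    (by ext; simp) (by ext; simp)

theorem constantCoeff_translation (c : σ → R) (p : MvPolynomial σ R) :
    constantCoeff (translation c p) = eval c p := by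
  have : constantCoeff.comp (translation c : MvPolynomial σ R →+* MvPolynomial σ R) =
      eval c := by
    ext <;> simp [translation]
  exact RingHom.congr_fun this p

theorem map_translation_span_X_sub_C (c : σ → R) :
    (Ideal.span (Set.range fun i => X i - C (c i))).map (translation c) = idealOfVars σ R := by
  rw [Ideal.map_span, ← Set.range_comp]
  congr 1
  ext i
  simp [translation]

theorem ker_eval_eq_span_X_sub_C (c : σ → R) :
    RingHom.ker (eval c) = Ideal.span (Set.range fun i => X i - C (c i)) := calc
  RingHom.ker (eval c) = (idealOfVars σ R).comap (translation c) := by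
    ext p
    rw [idealOfVars_eq_ker_constantCoeff, Ideal.mem_comap, RingHom.mem_ker, RingHom.mem_ker,
      constantCoeff_translation]
  _ = Ideal.span (Set.range fun i => X i - C (c i)) := by
    rw [← map_translation_span_X_sub_C c,
      Ideal.comap_map_of_bijective _ (translation c).bijective]

end MvPolynomial

namespace IsLocalization.AtPrime

open IsLocalRing

variable {R : Type*} [CommRing R] (p : Ideal R) (Rₚ : Type*) [CommRing Rₚ] [Algebra R Rₚ]

theorem maximalIdeal_pow_eq_bot_of_mul_eq_zero [p.IsPrime] [IsLocalization.AtPrime Rₚ p]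
    [IsLocalRing Rₚ] {n : ℕ} {c : R} (hc : c ∉ p) (h : ∀ x ∈ p ^ n, c * x = 0) :
    maximalIdeal Rₚ ^ n = ⊥ := by
  rw [← map_eq_maximalIdeal p Rₚ, ← Ideal.map_pow, Ideal.map_eq_bot_iff_le_ker]
  intro x hx
  rw [RingHom.mem_ker, IsLocalization.map_eq_zero_iff p.primeCompl]
  exact ⟨⟨c, hc⟩, h x hx⟩

noncomputable def equivQuotPowOfMaximalIdealPowEqBot [p.IsMaximal] [IsLocalization.AtPrime Rₚ p]
    [IsLocalRing Rₚ] {n : ℕ} (h : maximalIdeal Rₚ ^ n = ⊥) : Rₚ ≃ₐ[R] R ⧸ p ^ n :=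
  (AlgEquiv.quotientBot R Rₚ).symm.trans <|
    (Ideal.quotientEquivAlgOfEq R h.symm).trans (equivQuotMaximalIdealPow p Rₚ n).symm

end IsLocalization.AtPrime

noncomputable abbrev polyAugIdeal : Ideal (MvPolynomial (Fin 2) ℂ) := RingHom.ker (eval 1)

instance : polyAugIdeal.IsMaximal :=
  RingHom.ker_isMaximal_of_surjective _ fun a => ⟨C a, eval_C a⟩

theorem polyAugIdeal_eq_span : polyAugIdeal = Ideal.span {X 0 - 1, X 1 - 1} := by
  rw [polyAugIdeal, ker_eval_eq_span_X_sub_C]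
  congr 1
  ext p
  simp [Fin.exists_fin_two, eq_comm]

theorem virtIdeal2C_le_polyAugIdeal_sq : virtIdeal2C ≤ polyAugIdeal ^ 2 := by
  have hS : (X 0 - 1 : MvPolynomial (Fin 2) ℂ) ∈ polyAugIdeal := by simp
  have hT : (X 1 - 1 : MvPolynomial (Fin 2) ℂ) ∈ polyAugIdeal := by simp
  rw [virtIdeal2C, Ideal.span_le]
  rintro p (rfl | rfl | rfl) <;> rw [SetLike.mem_coe, pow_two]
  · rw [show ((X 1 - 1) * (X 1 ^ 2 - 1) : MvPolynomial (Fin 2) ℂ) =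
      (X 1 - 1) * ((X 1 - 1) * (X 1 + 1)) by ring]
    exact Ideal.mul_mem_mul hT (Ideal.mul_mem_right _ _ hT)
  · rw [show ((X 0 - 1) * (X 0 ^ 2 - 1) : MvPolynomial (Fin 2) ℂ) =
      (X 0 - 1) * ((X 0 - 1) * (X 0 + 1)) by ring]
    exact Ideal.mul_mem_mul hS (Ideal.mul_mem_right _ _ hS)
  · exact Ideal.mul_mem_mul (by simp) hT

theorem augIdeal2_eq_map : augIdeal2 = polyAugIdeal.map (Ideal.Quotient.mk virtIdeal2C) := by
  rw [polyAugIdeal_eq_span, Ideal.map_span, augIdeal2]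
  simp [Set.image_pair]

instance augIdeal2_isMaximal : augIdeal2.IsMaximal := by
  rw [augIdeal2_eq_map]
  refine Ideal.IsMaximal.map_of_surjective_of_ker_le Ideal.Quotient.mk_surjective ?_
  rw [Ideal.mk_ker]
  exact virtIdeal2C_le_polyAugIdeal_sq.trans (Ideal.pow_le_self two_ne_zero)

theorem span_X_eq_idealOfVars :
    Ideal.span {(X 0 : MvPolynomial (Fin 2) ℂ), X 1} = idealOfVars (Fin 2) ℂ := by
  rw [idealOfVars]
  congr 1
  ext p
  simp [Fin.exists_fin_two, eq_comm]

noncomputable def quotientAugIdeal2SqEquiv :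
    (VirtK2C ⧸ augIdeal2 ^ 2) ≃ₐ[ℂ] MvPolynomial (Fin 2) ℂ ⧸ idealOfVars (Fin 2) ℂ ^ 2 :=
  have h₁ : augIdeal2 ^ 2 = (polyAugIdeal ^ 2).map (Ideal.Quotient.mkₐ ℂ virtIdeal2C) := by
    rw [augIdeal2_eq_map, Ideal.map_pow]
    rfl
  have h₂ : virtIdeal2C ⊔ polyAugIdeal ^ 2 = polyAugIdeal ^ 2 :=
    sup_eq_right.2 virtIdeal2C_le_polyAugIdeal_sq
  (Ideal.quotientEquivAlgOfEq ℂ h₁).trans <|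
    (DoubleQuot.quotQuotEquivQuotSupₐ ℂ virtIdeal2C (polyAugIdeal ^ 2)).trans <|
    (Ideal.quotientEquivAlgOfEq ℂ h₂).trans <|
    Ideal.quotientEquivAlg (polyAugIdeal ^ 2) (idealOfVars (Fin 2) ℂ ^ 2) (translation 1) (by
      rw [Ideal.map_pow, polyAugIdeal, ker_eval_eq_span_X_sub_C]
      exact congrArg (· ^ 2) (map_translation_span_X_sub_C 1).symm)

theorem mk_virtIdeal2C_generator_eq_zero {p : MvPolynomial (Fin 2) ℂ}
    (hp : p ∈ ({(X 1 - 1) * ((X 1) ^ 2 - 1), (X 0 - 1) * ((X 0) ^ 2 - 1),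
      (X 0 - X 1) * (X 1 - 1)} : Set (MvPolynomial (Fin 2) ℂ))) :
    Ideal.Quotient.mk virtIdeal2C p = 0 :=
  Ideal.Quotient.eq_zero_iff_mem.2 (Ideal.subset_span hp)

theorem mk_prod_X_add_one_notMem_augIdeal2 :
    Ideal.Quotient.mk virtIdeal2C ((X 0 + 1) * (X 1 + 1)) ∉ augIdeal2 := by
  rw [augIdeal2_eq_map, Ideal.mem_quotient_iff_mem
    (virtIdeal2C_le_polyAugIdeal_sq.trans (Ideal.pow_le_self two_ne_zero))]
  norm_num [polyAugIdeal]

theorem mk_prod_X_add_one_mul_eq_zero {x : VirtK2C} (hx : x ∈ augIdeal2 ^ 2) :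
    Ideal.Quotient.mk virtIdeal2C ((X 0 + 1) * (X 1 + 1)) * x = 0 := by
  set a := Ideal.Quotient.mk virtIdeal2C (X 0)
  set b := Ideal.Quotient.mk virtIdeal2C (X 1)
  have hb : (b - 1) * (b ^ 2 - 1) = 0 := by
    simpa using mk_virtIdeal2C_generator_eq_zero (Or.inl rfl)
  have ha : (a - 1) * (a ^ 2 - 1) = 0 := by
    simpa using mk_virtIdeal2C_generator_eq_zero (Or.inr (Or.inl rfl))
  have hab : (a - b) * (b - 1) = 0 := by
    simpa using mk_virtIdeal2C_generator_eq_zero (Or.inr (Or.inr rfl))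
  suffices augIdeal2 ^ 2 ≤ (Submodule.span VirtK2C {(a + 1) * (b + 1)}).annihilator by
    simpa [mul_comm] using (Submodule.mem_annihilator_span_singleton _ _).1 (this hx)
  rw [augIdeal2, pow_two, Ideal.span_pair_mul_span_pair, Ideal.span_le]
  simp only [Set.insert_subset_iff, Set.singleton_subset_iff, SetLike.mem_coe,
    Submodule.mem_annihilator_span_singleton, smul_eq_mul]
  refine ⟨?_, ?_, ?_, ?_⟩
  · linear_combination (b + 1) * ha
  · linear_combination (a + 1) * hb + (a + 1) * (b + 1) * hab
  · linear_combination (a + 1) * hb + (a + 1) * (b + 1) * hab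
  · linear_combination (a + 1) * hb

theorem virtual_Ktheory_P12_HKRC :
    ∃ hm : augIdeal2.IsMaximal,
      letI := hm.isPrime
      Nonempty (Localization.AtPrime augIdeal2 ≃ₐ[ℂ] SquareZeroTwoVars) ∧
      Module.finrank ℂ (Localization.AtPrime augIdeal2) = 3 ∧
      IsLocalRing.maximalIdeal (Localization.AtPrime augIdeal2) ^ 2 = ⊥ := by
  have hsq : IsLocalRing.maximalIdeal (Localization.AtPrime augIdeal2) ^ 2 = ⊥ :=
    IsLocalization.AtPrime.maximalIdeal_pow_eq_bot_of_mul_eq_zero augIdeal2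
      (Localization.AtPrime augIdeal2) (n := 2) mk_prod_X_add_one_notMem_augIdeal2
      fun _ => mk_prod_X_add_one_mul_eq_zero
  let e : Localization.AtPrime augIdeal2 ≃ₐ[ℂ]
      MvPolynomial (Fin 2) ℂ ⧸ idealOfVars (Fin 2) ℂ ^ 2 :=
    ((IsLocalization.AtPrime.equivQuotPowOfMaximalIdealPowEqBot augIdeal2
      (Localization.AtPrime augIdeal2) hsq).restrictScalars ℂ).trans quotientAugIdeal2SqEquiv
  refine ⟨augIdeal2_isMaximal,
    ⟨e.trans (Ideal.quotientEquivAlgOfEq ℂ (by rw [span_X_eq_idealOfVars]))⟩, ?_, hsq⟩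
  rw [e.toLinearEquiv.finrank_eq, finrank_quotient_idealOfVars_sq]
  simp
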